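/- arXiv:2305.01008 — 2 statements merged into one kernel-verified Lean document; each statement's English description precedes it below -/
import Mathlib

section
/- Let D be a delta-matroid on [n] and let A, B ⊆ [n] be disjoint subsets such that there exists F ∈ 𝓕 with A ⊆ F and F ∩ B = ∅. Let D/A∖B be the delta-matroid on [n]∖(A∪B) with feasible sets {F∖A : F∈𝓕, A⊆F, F∩B=∅} (the result of contracting all elements of A and deleting all elements of B). Then for every admissible set S on [n]∖(A∪B), g_{D/A∖B}(S) = g_D((S⁺∪A, S⁻∪B)) − g_D((A, B)). -/
open Finset
open scoped symmDiff

/-- The rank-type function of a nonempty family `G` of subsets of `Fin n`, evaluated on an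
admissible set `(Sp, Sn)`: `max_{F ∈ G} (|Sp ∩ F| + |Sn \ F| − |Sn ∩ F| − |Sp \ F|)`.
(Junk value `0` when the family is empty.) -/
noncomputable def gFam {n : ℕ} (G : Finset (Finset (Fin n))) (Sp Sn : Finset (Fin n)) : ℤ :=
  if h : G.Nonempty then
    G.sup' h fun F => ((Sp ∩ F).card : ℤ) + ((Sn \ F).card : ℤ)
      - ((Sn ∩ F).card : ℤ) - ((Sp \ F).card : ℤ)
  else 0

/-- A delta-matroid on `[n]`: a nonempty family of subsets of `Fin n` (each `F` encoding the
size-`n` admissible set `(F, [n] \ F)`), satisfying the symmetric exchange axiom. -/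
structure DeltaMatroid (n : ℕ) where
  feas : Finset (Finset (Fin n))
  nonempty : feas.Nonempty
  exchange : ∀ F₁ ∈ feas, ∀ F₂ ∈ feas, ∀ x ∈ F₁ ∆ F₂, ∃ y ∈ F₁ ∆ F₂, F₁ ∆ {x, y} ∈ feas

/-- The rank function `g_D` of a delta-matroid, on admissible sets `(Sp, Sn)`. -/
noncomputable def DeltaMatroid.g {n : ℕ} (D : DeltaMatroid n) :
    Finset (Fin n) → Finset (Fin n) → ℤ :=
  gFam D.feas

/-!
Write `g(S)` as the maximum over feasible `F` of the signed agreement of `(F, [n] ∖ F)` with `S`.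
It is additive in `S`, and on `(A, B̄)` it attains its largest possible value `|A| + |B|` exactly
when `A ⊆ F` and `F ∩ B = ∅`. So everything reduces to finding such an `F` among the maximisers
for `S ∪ (A, B̄)`. Take a maximiser closest to a feasible `F₀ ⊇ A` avoiding `B`. If it disagrees
with `(A, B̄)` at `x`, then `x ∈ F Δ F₀`, and the exchange axiom gives a feasible `F Δ {x, y}`
that is closer to `F₀` and no worse: `x` changes from a disagreement into an agreement, and `y`
costs at most one.
-/

section SignedAgreement

variable {α : Type*} [DecidableEq α] {P N F : Finset α}

def signedAgreement (P N F : Finset α) : ℤ :=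
  #(P ∩ F) + #(N \ F) - #(N ∩ F) - #(P \ F)

theorem signedAgreement_union {P₁ P₂ N₁ N₂ : Finset α} (hP : Disjoint P₁ P₂)
    (hN : Disjoint N₁ N₂) (F : Finset α) :
    signedAgreement (P₁ ∪ P₂) (N₁ ∪ N₂) F = signedAgreement P₁ N₁ F + signedAgreement P₂ N₂ F := by
  simp only [signedAgreement, union_inter_distrib_right, union_sdiff_distrib,
    card_union_of_disjoint (hP.mono inter_subset_left inter_subset_left),
    card_union_of_disjoint (hP.mono sdiff_subset sdiff_subset),
    card_union_of_disjoint (hN.mono inter_subset_left inter_subset_left),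
    card_union_of_disjoint (hN.mono sdiff_subset sdiff_subset)]
  push_cast
  ring

theorem signedAgreement_le_card (P N F : Finset α) : signedAgreement P N F ≤ #P + #N := by
  have hP : #(P ∩ F) ≤ #P := card_le_card inter_subset_left
  have hN : #(N \ F) ≤ #N := card_le_card sdiff_subset
  unfold signedAgreement
  omega

theorem signedAgreement_eq_card (hPF : P ⊆ F) (hFN : Disjoint F N) :
    signedAgreement P N F = #P + #N := by
  simp [signedAgreement, inter_eq_left.mpr hPF, sdiff_eq_self_of_disjoint hFN.symm,
    disjoint_iff_inter_eq_empty.mp hFN.symm, sdiff_eq_empty_iff_subset.mpr hPF]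

theorem signedAgreement_sdiff (A : Finset α) (hPA : Disjoint P A) (hNA : Disjoint N A) :
    signedAgreement P N (F \ A) = signedAgreement P N F := by
  have hP := Finset.disjoint_left.mp hPA
  have hN := Finset.disjoint_left.mp hNA
  have e₁ : P ∩ (F \ A) = P ∩ F := by ext; simp only [mem_inter, mem_sdiff]; grind
  have e₂ : N \ (F \ A) = N \ F := by ext; simp only [mem_sdiff]; grind
  have e₃ : N ∩ (F \ A) = N ∩ F := by ext; simp only [mem_inter, mem_sdiff]; grind
  have e₄ : P \ (F \ A) = P \ F := by ext; simp only [mem_sdiff]; grind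
  rw [signedAgreement, signedAgreement, e₁, e₂, e₃, e₄]

theorem signedAgreement_eq_sub_card_disagreement (hPN : Disjoint P N) :
    signedAgreement P N F = #P + #N - 2 * #(P \ F ∪ N ∩ F) := by
  rw [card_union_of_disjoint (hPN.mono sdiff_subset inter_subset_left), signedAgreement,
    ← card_inter_add_card_sdiff P F, ← card_inter_add_card_sdiff N F]
  push_cast
  ring

theorem signedAgreement_le_symmDiff_pair (hPN : Disjoint P N) {x : α} (hx : x ∈ P \ F ∪ N ∩ F)
    (y : α) : signedAgreement P N F ≤ signedAgreement P N (F ∆ {x, y}) := by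
  rw [signedAgreement_eq_sub_card_disagreement hPN, signedAgreement_eq_sub_card_disagreement hPN]
  have hxPN : x ∈ P → x ∉ N := fun h => Finset.disjoint_left.mp hPN h
  have hsub : P \ (F ∆ {x, y}) ∪ N ∩ (F ∆ {x, y}) ⊆ insert y ((P \ F ∪ N ∩ F).erase x) := by
    intro z
    simp only [mem_union, mem_sdiff, mem_inter, mem_symmDiff, mem_insert, mem_singleton,
      mem_erase] at hx ⊢
    grind
  have hcard := (card_le_card hsub).trans (card_insert_le _ _)
  rw [card_erase_of_mem hx] at hcard
  have hpos : 0 < #(P \ F ∪ N ∩ F) := card_pos.mpr ⟨x, hx⟩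
  omega

end SignedAgreement

theorem gFam_eq_of_forall_le {n : ℕ} {G : Finset (Finset (Fin n))} {P N F : Finset (Fin n)}
    (hF : F ∈ G) (hmax : ∀ F' ∈ G, signedAgreement P N F' ≤ signedAgreement P N F) :
    gFam G P N = signedAgreement P N F := by
  rw [gFam, dif_pos ⟨F, hF⟩]
  exact le_antisymm (sup'_le _ _ hmax) (le_sup' (signedAgreement P N) hF)

theorem gFam_eq_card {n : ℕ} {G : Finset (Finset (Fin n))} {P N F : Finset (Fin n)}
    (hF : F ∈ G) (hPF : P ⊆ F) (hFN : Disjoint F N) : gFam G P N = #P + #N := by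
  refine (gFam_eq_of_forall_le hF fun F' _ => ?_).trans (signedAgreement_eq_card hPF hFN)
  rw [signedAgreement_eq_card hPF hFN]
  exact signedAgreement_le_card P N F'

namespace DeltaMatroid

variable {n : ℕ} (D : DeltaMatroid n) {P N : Finset (Fin n)}

theorem exists_closer_of_mem_disagreement (hPN : Disjoint P N) {F F₀ : Finset (Fin n)}
    (hF : F ∈ D.feas) (hF₀ : F₀ ∈ D.feas) {x : Fin n} (hxF₀ : x ∈ F ∆ F₀)
    (hx : x ∈ P \ F ∪ N ∩ F) :
    ∃ F' ∈ D.feas, signedAgreement P N F ≤ signedAgreement P N F' ∧ #(F' ∆ F₀) < #(F ∆ F₀) := by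
  obtain ⟨y, hyF₀, hF'⟩ := D.exchange F hF F₀ hF₀ x hxF₀
  refine ⟨F ∆ {x, y}, hF', signedAgreement_le_symmDiff_pair hPN hx y, ?_⟩
  have hxy : {x, y} ⊆ F ∆ F₀ := insert_subset hxF₀ (singleton_subset_iff.mpr hyF₀)
  rw [symmDiff_right_comm, symmDiff_of_ge hxy]
  exact card_lt_card (sdiff_ssubset hxy (insert_nonempty x {y}))

theorem exists_max_signedAgreement_subset_disjoint (hPN : Disjoint P N) {A B : Finset (Fin n)}
    (hAP : A ⊆ P) (hBN : B ⊆ N) (h : ∃ F ∈ D.feas, A ⊆ F ∧ Disjoint F B) :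
    ∃ F ∈ D.feas, A ⊆ F ∧ Disjoint F B ∧
      ∀ F' ∈ D.feas, signedAgreement P N F' ≤ signedAgreement P N F := by
  obtain ⟨F₀, hF₀, hAF₀, hF₀B⟩ := h
  set M := D.feas.filter fun F => ∀ F' ∈ D.feas, signedAgreement P N F' ≤ signedAgreement P N F
  have hM : M.Nonempty := by
    obtain ⟨F, hF, hmax⟩ := exists_max_image D.feas (signedAgreement P N) D.nonempty
    exact ⟨F, mem_filter.mpr ⟨hF, hmax⟩⟩
  obtain ⟨F, hFM, hclosest⟩ := exists_min_image M (fun F => #(F ∆ F₀)) hM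
  obtain ⟨hF, hmax⟩ := mem_filter.mp hFM
  have hagree : ∀ x ∈ F ∆ F₀, x ∉ P \ F ∪ N ∩ F := by
    intro x hxF₀ hx
    obtain ⟨F', hF', hle, hcloser⟩ := D.exists_closer_of_mem_disagreement hPN hF hF₀ hxF₀ hx
    have hF'M : F' ∈ M := mem_filter.mpr ⟨hF', fun F'' hF'' => (hmax F'' hF'').trans hle⟩
    exact (hclosest F' hF'M).not_gt hcloser
  refine ⟨F, hF, fun x hxA => ?_, disjoint_right.mpr fun x hxB hxF => ?_, hmax⟩
  · by_contra hxF
    exact hagree x (mem_symmDiff.mpr (.inr ⟨hAF₀ hxA, hxF⟩))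
      (mem_union_left _ (mem_sdiff.mpr ⟨hAP hxA, hxF⟩))
  · exact hagree x (mem_symmDiff.mpr (.inl ⟨hxF, disjoint_right.mp hF₀B hxB⟩))
      (mem_union_right _ (mem_inter.mpr ⟨hBN hxB, hxF⟩))

end DeltaMatroid

/-- **Proposition (rank of minors).** For disjoint `A, B ⊆ [n]` such that some feasible set
contains `A` and avoids `B`, the minor `D/A∖B` (with feasible sets
`{F \ A : F ∈ 𝓕, A ⊆ F, F ∩ B = ∅}`) satisfies
`g_{D/A∖B}(S) = g_D(S ∪ (A, B̄)) − g_D((A, B̄))` for every admissible set `S` on `[n] \ (A ∪ B)`. -/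
theorem deltaMatroid_minor_rank (n : ℕ) (D : DeltaMatroid n) (A B : Finset (Fin n))
    (hAB : Disjoint A B) (hfeas : ∃ F ∈ D.feas, A ⊆ F ∧ Disjoint F B)
    (Sp Sn : Finset (Fin n)) (hS : Disjoint Sp Sn)
    (hSpAB : Disjoint Sp (A ∪ B)) (hSnAB : Disjoint Sn (A ∪ B)) :
    gFam ((D.feas.filter fun F => A ⊆ F ∧ Disjoint F B).image (· \ A)) Sp Sn
      = D.g (Sp ∪ A) (Sn ∪ B) - D.g A B := by
  obtain ⟨hSpA, hSpB⟩ := disjoint_union_right.mp hSpAB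
  obtain ⟨hSnA, hSnB⟩ := disjoint_union_right.mp hSnAB
  have hPN : Disjoint (Sp ∪ A) (Sn ∪ B) :=
    disjoint_union_left.mpr ⟨disjoint_union_right.mpr ⟨hS, hSpB⟩,
      disjoint_union_right.mpr ⟨hSnA.symm, hAB⟩⟩
  have hsplit : ∀ F, A ⊆ F → Disjoint F B →
      signedAgreement (Sp ∪ A) (Sn ∪ B) F = signedAgreement Sp Sn F + (#A + #B) := by
    intro F hAF hFB
    rw [signedAgreement_union hSpA hSnB, signedAgreement_eq_card hAF hFB]
  obtain ⟨F, hF, hAF, hFB, hmax⟩ := D.exists_max_signedAgreement_subset_disjoint hPN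
    subset_union_right subset_union_right hfeas
  have hminor_max : ∀ F' ∈ (D.feas.filter fun F => A ⊆ F ∧ Disjoint F B).image (· \ A),
      signedAgreement Sp Sn F' ≤ signedAgreement Sp Sn (F \ A) := by
    simp only [mem_image, mem_filter]
    rintro _ ⟨F', ⟨hF', hAF', hF'B⟩, rfl⟩
    have := hmax F' hF'
    rw [hsplit F hAF hFB, hsplit F' hAF' hF'B] at this
    rw [signedAgreement_sdiff A hSpA hSnA, signedAgreement_sdiff A hSpA hSnA]
    linarith
  obtain ⟨F₀, hF₀, hAF₀, hF₀B⟩ := hfeas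
  rw [gFam_eq_of_forall_le (mem_image_of_mem _ (mem_filter.mpr ⟨hF, hAF, hFB⟩)) hminor_max,
    DeltaMatroid.g, gFam_eq_of_forall_le hF hmax, gFam_eq_card hF₀ hAF₀ hF₀B,
    hsplit F hAF hFB, signedAgreement_sdiff A hSpA hSnA]
  ring
end

section
/- A function h from admissible sets on [n] to the integers is equal to h_D for some delta-matroid D on [n] if and only if: (1) h(∅,∅) = 0; (2) h(S) ∈ {0,1} whenever |S| = 1; and (3) 2·h(S) + 2·h(T) ≥ 2·h(S ⊓ T) + 2·h(S ⊔ T) + |S⁺∩T⁻| + |S⁻∩T⁺| for all admissible S, T. -/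
/-!
Write `a_F(S) = |S⁺ ∩ F| + |S⁻ \ F|` for the number of elements of `S` on which `(F, Fᶜ)` agrees
with `S`, so that `g_D(S) + |S| = 2 max_{F ∈ 𝓕} a_F(S)`. For fixed `F`,
`a_F(S ⊓ T) + a_F(S ⊔ T) + |S⁺ ∩ T⁻| + |S⁻ ∩ T⁺| = a_F(S) + a_F(T)`, so the inequality for `h_D`
follows once a single `F` maximizes both `a_F(S ⊓ T)` and `a_F(S ⊔ T)`; for the nested pair
`S ⊓ T ⊑ S ⊔ T`, symmetric exchange turns two maximizers at minimal distance into one.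

Conversely, the axioms make `h` monotone along `⊑` with increments in `{0, 1}` that can only
shrink along `⊑`, and at each unused element one of its two signs is a gain. Let
`𝓕 = {F | h(F, Fᶜ) = n}`. Greedy extension puts every `S` below a full `T` with
`h(T) = h(S) + n - |S|`, and a full `T` with `h(T) < n` has a single flip that gains (otherwise
every deletion loses, which forces full rank), so `T` is within `n - h(T)` flips of `𝓕`; this
gives `h = max_F a_F`. For exchange at `x ∈ F₂ \ F₁`, take `F ∈ 𝓕` containing `x`, agreeing with
`F₁` off `F₁ ∆ F₂` and closest to `F₁`. By minimality no element of `F₁ ∆ F` other than `x` can be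
added with its sign in `F₁` to the common part `A` of `F₁ ∪ {x}` and `F` at a gain, so by
diminishing returns `h(F₁ ∪ {x}) = h(A) = n + 1 - |F₁ ∆ F|`; as `h(F₁ ∪ {x}) ≥ n - 1`, this forces
`|F₁ ∆ F| ≤ 2`.
-/

open Finset
open scoped symmDiff

variable {α : Type*} [DecidableEq α]

theorem Finset.exists_eq_pair_of_card_le_two {E : Finset α} {x : α} (hx : x ∈ E)
    (hE : E.card ≤ 2) : ∃ y ∈ E, E = {x, y} := by
  rcases (E.erase x).eq_empty_or_nonempty with h | ⟨y, hy⟩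
  · exact ⟨x, hx, by rw [pair_eq_singleton, ← insert_erase hx, h, insert_empty]⟩
  · refine ⟨y, mem_of_mem_erase hy, (eq_of_subset_of_card_le (by grind) ?_).symm⟩
    rw [card_pair (ne_of_mem_erase hy).symm]
    exact hE

def agreement (F Sp Sn : Finset α) : ℕ := (Sp ∩ F).card + (Sn \ F).card

-- the summand of `gFam`: the dot product of the signed vectors of `(Sp, Sn)` and `(F, Fᶜ)`
def signedPairing (F Sp Sn : Finset α) : ℤ :=
  (Sp ∩ F).card + (Sn \ F).card - (Sn ∩ F).card - (Sp \ F).card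

theorem signedPairing_add_card (F Sp Sn : Finset α) :
    signedPairing F Sp Sn + Sp.card + Sn.card = 2 * agreement F Sp Sn := by
  have := card_inter_add_card_sdiff Sp F
  have := card_inter_add_card_sdiff Sn F
  unfold signedPairing agreement
  omega

def signVec (Sp Sn : Finset α) (e : α) : ℤ := if e ∈ Sp then 1 else if e ∈ Sn then -1 else 0

def pmVec (F : Finset α) (e : α) : ℤ := if e ∈ F then 1 else -1

theorem signVec_mul_pmVec_le_one (Sp Sn F : Finset α) (e : α) :
    signVec Sp Sn e * pmVec F e ≤ 1 := by
  unfold signVec pmVec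
  split_ifs <;> norm_num

theorem signVec_mul_pmVec_eq_neg {Up Un Vp Vn F G : Finset α} {e : α} (hdV : Disjoint Vp Vn)
    (hp : Up ⊆ Vp) (hn : Un ⊆ Vn) (he : e ∈ F ∆ G) (hU : signVec Up Un e ≠ 0) :
    signVec Vp Vn e * pmVec G e = -(signVec Up Un e * pmVec F e) := by
  have : e ∈ Vp → e ∉ Vn := fun h => disjoint_left.mp hdV h
  have := @hp e
  have := @hn e
  rw [mem_symmDiff] at he
  simp only [signVec, pmVec] at hU ⊢
  split_ifs at hU ⊢ <;> simp_all

section SignedSums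

variable [Fintype α] {Sp Sn Tp Tn : Finset α}

theorem natCast_card_eq_sum_ite (A : Finset α) :
    (A.card : ℤ) = ∑ e, if e ∈ A then 1 else 0 := by
  rw [sum_ite_mem, univ_inter, sum_const, nsmul_eq_mul, mul_one]

theorem signedPairing_eq_sum (F : Finset α) (hd : Disjoint Sp Sn) :
    signedPairing F Sp Sn = ∑ e, signVec Sp Sn e * pmVec F e := by
  simp only [signedPairing, natCast_card_eq_sum_ite, ← sum_sub_distrib, ← sum_add_distrib]
  refine sum_congr rfl fun e _ => ?_
  have : e ∈ Sp → e ∉ Sn := fun he => disjoint_left.mp hd he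
  simp only [signVec, pmVec, mem_inter, mem_sdiff]
  split_ifs <;> simp_all

theorem signedPairing_symmDiff (hd : Disjoint Sp Sn) (F X : Finset α) :
    signedPairing (F ∆ X) Sp Sn =
      signedPairing F Sp Sn - 2 * ∑ e ∈ X, signVec Sp Sn e * pmVec F e := by
  have (e : α) : signVec Sp Sn e * pmVec (F ∆ X) e =
      signVec Sp Sn e * pmVec F e - if e ∈ X then 2 * (signVec Sp Sn e * pmVec F e) else 0 := by
    simp only [pmVec, mem_symmDiff]
    split_ifs <;> simp_all <;> ring
  simp only [signedPairing_eq_sum _ hd, this, sum_sub_distrib, sum_ite_mem, univ_inter, mul_sum]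

theorem agreement_inf_add_agreement_sup (F : Finset α) (hS : Disjoint Sp Sn)
    (hT : Disjoint Tp Tn) :
    agreement F (Sp ∩ Tp) (Sn ∩ Tn) + agreement F ((Sp ∪ Tp) \ (Sn ∪ Tn)) ((Sn ∪ Tn) \ (Sp ∪ Tp))
      + (Sp ∩ Tn).card + (Sn ∩ Tp).card = agreement F Sp Sn + agreement F Tp Tn := by
  zify
  simp only [agreement, Nat.cast_add, natCast_card_eq_sum_ite, ← sum_add_distrib]
  refine sum_congr rfl fun e _ => ?_
  have : e ∈ Sp → e ∉ Sn := fun he => disjoint_left.mp hS he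
  have : e ∈ Tp → e ∉ Tn := fun he => disjoint_left.mp hT he
  simp only [mem_inter, mem_sdiff, mem_union]
  by_cases e ∈ F <;> by_cases e ∈ Sp <;> by_cases e ∈ Sn <;> by_cases e ∈ Tp <;>
    by_cases e ∈ Tn <;> simp_all

end SignedSums

structure IsDeltaRank (h : Finset α → Finset α → ℤ) : Prop where
  empty : h ∅ ∅ = 0
  card_eq_one : ∀ Sp Sn : Finset α, Disjoint Sp Sn → Sp.card + Sn.card = 1 →
    h Sp Sn = 0 ∨ h Sp Sn = 1
  bisubmodular : ∀ Sp Sn Tp Tn : Finset α, Disjoint Sp Sn → Disjoint Tp Tn →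
    2 * h (Sp ∩ Tp) (Sn ∩ Tn) + 2 * h ((Sp ∪ Tp) \ (Sn ∪ Tn)) ((Sn ∪ Tn) \ (Sp ∪ Tp))
      + ((Sp ∩ Tn).card : ℤ) + ((Sn ∩ Tp).card : ℤ) ≤ 2 * h Sp Sn + 2 * h Tp Tn

namespace DeltaMatroid

variable {n : ℕ} (D : DeltaMatroid n) {h : Finset (Fin n) → Finset (Fin n) → ℤ}
  {F G Sp Sn : Finset (Fin n)}

def IsMaximizer (F Sp Sn : Finset (Fin n)) : Prop :=
  F ∈ D.feas ∧ ∀ F' ∈ D.feas, signedPairing F' Sp Sn ≤ signedPairing F Sp Sn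

theorem exists_isMaximizer (Sp Sn : Finset (Fin n)) : ∃ F, D.IsMaximizer F Sp Sn := by
  obtain ⟨F, hF, hmax⟩ := exists_max_image D.feas (signedPairing · Sp Sn) D.nonempty
  exact ⟨F, hF, hmax⟩

theorem g_eq_sup' (Sp Sn : Finset (Fin n)) :
    D.g Sp Sn = D.feas.sup' D.nonempty (signedPairing · Sp Sn) :=
  dif_pos D.nonempty

theorem signedPairing_le_g (hF : F ∈ D.feas) : signedPairing F Sp Sn ≤ D.g Sp Sn := by
  rw [g_eq_sup']
  exact le_sup' (signedPairing · Sp Sn) hF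

theorem IsMaximizer.g_eq {D : DeltaMatroid n} (hF : D.IsMaximizer F Sp Sn) :
    D.g Sp Sn = signedPairing F Sp Sn :=
  le_antisymm (by rw [g_eq_sup']; exact sup'_le _ _ hF.2) (D.signedPairing_le_g hF.1)

theorem exists_closer_maximizer_or (hd : Disjoint Sp Sn) (hF : D.IsMaximizer F Sp Sn)
    (hG : G ∈ D.feas) {x : Fin n} (hx : x ∈ F ∆ G) (hxF : signVec Sp Sn x * pmVec F x ≤ 0) :
    (∃ F', D.IsMaximizer F' Sp Sn ∧ (F' ∆ G).card < (F ∆ G).card) ∨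
      signVec Sp Sn x = 0 ∧ ∃ y ∈ F ∆ G, signVec Sp Sn y * pmVec F y = 1 := by
  obtain ⟨y, hy, hF'⟩ := D.exchange F hF.1 G hG x hx
  have hcloser : ((F ∆ {x, y}) ∆ G).card < (F ∆ G).card :=
    (card_le_card (show (F ∆ {x, y}) ∆ G ⊆ (F ∆ G).erase x by grind [mem_symmDiff])).trans_lt
      (card_erase_lt_of_mem hx)
  have hval := signedPairing_symmDiff hd F {x, y}
  by_cases hsum : ∑ e ∈ {x, y}, signVec Sp Sn e * pmVec F e ≤ 0
  · exact .inl ⟨_, ⟨hF', fun F'' hF'' => (hF.2 F'' hF'').trans (by omega)⟩, hcloser⟩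
  · have hxy : x ≠ y := by rintro rfl; simp only [pair_eq_singleton, sum_singleton] at hsum; omega
    rw [sum_pair hxy] at hsum
    have := signVec_mul_pmVec_le_one Sp Sn F y
    refine .inr ⟨?_, y, hy, by omega⟩
    have hx0 : signVec Sp Sn x * pmVec F x = 0 := by omega
    exact (mul_eq_zero.mp hx0).resolve_right (by unfold pmVec; split_ifs <;> norm_num)

theorem exists_common_maximizer {Up Un Vp Vn : Finset (Fin n)} (hdV : Disjoint Vp Vn)
    (hp : Up ⊆ Vp) (hn : Un ⊆ Vn) : ∃ F, D.IsMaximizer F Up Un ∧ D.IsMaximizer F Vp Vn := by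
  classical
  obtain ⟨F₀, hF₀⟩ := D.exists_isMaximizer Up Un
  obtain ⟨G₀, hG₀⟩ := D.exists_isMaximizer Vp Vn
  obtain ⟨⟨F, G⟩, hFG, hmin⟩ := exists_min_image
    (univ.filter fun p : Finset (Fin n) × Finset (Fin n) =>
      D.IsMaximizer p.1 Up Un ∧ D.IsMaximizer p.2 Vp Vn)
    (fun p => (p.1 ∆ p.2).card) ⟨(F₀, G₀), mem_filter.mpr ⟨mem_univ _, hF₀, hG₀⟩⟩
  simp only [mem_filter, mem_univ, true_and, and_imp, Prod.forall] at hFG hmin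
  obtain ⟨hF, hG⟩ := hFG
  refine ⟨F, hF, ?_⟩
  suffices F ∆ G = ∅ by rwa [symmDiff_eq_bot.mp this]
  -- on `F ∆ G`, `F` never agrees with `U`, since `G` would then disagree with `V ⊒ U`
  have hnot : ∀ y ∈ F ∆ G, signVec Up Un y * pmVec F y ≠ 1 := by
    intro y hy hy1
    have hU : signVec Up Un y ≠ 0 := by rintro h0; simp [h0] at hy1
    have hV := signVec_mul_pmVec_eq_neg (G := G) hdV hp hn hy hU
    rcases D.exists_closer_maximizer_or hdV hG hF.1 (symmDiff_comm F G ▸ hy)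
      (by rw [hV, hy1]; norm_num) with ⟨G', hG', hlt⟩ | ⟨h0, -⟩
    · have := hmin F G' hF hG'
      rw [symmDiff_comm G', symmDiff_comm G] at hlt
      omega
    · simp [h0, hy1] at hV
  by_contra hne
  obtain ⟨x, hx⟩ := nonempty_iff_ne_empty.mpr hne
  have := signVec_mul_pmVec_le_one Up Un F x
  rcases D.exists_closer_maximizer_or (hdV.mono hp hn) hF hG.1 hx
    (by have := hnot x hx; omega) with ⟨F', hF', hlt⟩ | ⟨-, y, hy, hy1⟩
  · have := hmin F' G hF' hG
    omega
  · exact hnot y hy hy1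

theorem agreement_le_of_two_mul_eq
    (hD : ∀ Sp Sn, Disjoint Sp Sn → 2 * h Sp Sn = D.g Sp Sn + Sp.card + Sn.card)
    (hd : Disjoint Sp Sn) (hF : F ∈ D.feas) : (agreement F Sp Sn : ℤ) ≤ h Sp Sn := by
  have := hD Sp Sn hd
  have := D.signedPairing_le_g (Sp := Sp) (Sn := Sn) hF
  have := signedPairing_add_card F Sp Sn
  omega

theorem eq_agreement_of_two_mul_eq
    (hD : ∀ Sp Sn, Disjoint Sp Sn → 2 * h Sp Sn = D.g Sp Sn + Sp.card + Sn.card)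
    (hd : Disjoint Sp Sn) (hF : D.IsMaximizer F Sp Sn) : h Sp Sn = agreement F Sp Sn := by
  have := hD Sp Sn hd
  have := hF.g_eq
  have := signedPairing_add_card F Sp Sn
  omega

theorem isDeltaRank_of_two_mul_eq
    (hD : ∀ Sp Sn, Disjoint Sp Sn → 2 * h Sp Sn = D.g Sp Sn + Sp.card + Sn.card) :
    IsDeltaRank h where
  empty := by
    obtain ⟨F, hF⟩ := D.exists_isMaximizer ∅ ∅
    simp [D.eq_agreement_of_two_mul_eq hD (disjoint_empty_left ∅) hF, agreement]
  card_eq_one Sp Sn hd hc := by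
    obtain ⟨F, hF⟩ := D.exists_isMaximizer Sp Sn
    rw [D.eq_agreement_of_two_mul_eq hD hd hF]
    have := card_le_card (inter_subset_left (s₁ := Sp) (s₂ := F))
    have := card_le_card (sdiff_subset (s := Sn) (t := F))
    unfold agreement
    omega
  bisubmodular Sp Sn Tp Tn hS hT := by
    have hdU : Disjoint (Sp ∩ Tp) (Sn ∩ Tn) := hS.mono inter_subset_left inter_subset_left
    have hdV : Disjoint ((Sp ∪ Tp) \ (Sn ∪ Tn)) ((Sn ∪ Tn) \ (Sp ∪ Tp)) := disjoint_sdiff_sdiff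
    obtain ⟨F, hU, hV⟩ := D.exists_common_maximizer (Up := Sp ∩ Tp) (Un := Sn ∩ Tn) hdV
      (by grind [disjoint_left]) (by grind [disjoint_left])
    have := congrArg (Nat.cast : ℕ → ℤ) (agreement_inf_add_agreement_sup F hS hT)
    push_cast at this
    have := D.eq_agreement_of_two_mul_eq hD hdU hU
    have := D.eq_agreement_of_two_mul_eq hD hdV hV
    have := D.agreement_le_of_two_mul_eq hD hS hU.1
    have := D.agreement_le_of_two_mul_eq hD hT hU.1
    omega

end DeltaMatroid

namespace IsDeltaRank

variable {h : Finset α → Finset α → ℤ} {Sp Sn Sp' Sn' X F₁ F₂ : Finset α} {x : α}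

theorem swap (hh : IsDeltaRank h) : IsDeltaRank fun Sp Sn => h Sn Sp where
  empty := hh.empty
  card_eq_one Sp Sn hd hc := hh.card_eq_one Sn Sp hd.symm (by omega)
  bisubmodular Sp Sn Tp Tn hS hT := by
    have := hh.bisubmodular Sn Sp Tn Tp hS.symm hT.symm
    omega

theorem insert_left_sub_le (hh : IsDeltaRank h) (hp : Sp' ⊆ Sp) (hn : Sn' ⊆ Sn)
    (hd : Disjoint Sp Sn) (hxp : x ∉ Sp) (hxn : x ∉ Sn) :
    h (insert x Sp) Sn - h Sp Sn ≤ h (insert x Sp') Sn' - h Sp' Sn' := by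
  have H := hh.bisubmodular (insert x Sp') Sn' Sp Sn (by grind [disjoint_left]) hd
  rw [show insert x Sp' ∩ Sp = Sp' by grind, show Sn' ∩ Sn = Sn' by grind,
    show (insert x Sp' ∪ Sp) \ (Sn' ∪ Sn) = insert x Sp by grind [disjoint_left],
    show (Sn' ∪ Sn) \ (insert x Sp' ∪ Sp) = Sn by grind [disjoint_left],
    show insert x Sp' ∩ Sn = ∅ by grind [disjoint_left],
    show Sn' ∩ Sp = ∅ by grind [disjoint_left], card_empty, Nat.cast_zero] at H
  omega

theorem insert_left_le_add_one (hh : IsDeltaRank h) (hd : Disjoint Sp Sn) (hxp : x ∉ Sp)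
    (hxn : x ∉ Sn) : h (insert x Sp) Sn ≤ h Sp Sn + 1 := by
  have hgain := hh.insert_left_sub_le (empty_subset Sp) (empty_subset Sn) hd hxp hxn
  have := hh.card_eq_one {x} ∅ (disjoint_empty_right _) rfl
  rw [insert_empty, hh.empty] at hgain
  omega

theorem two_mul_add_one_le (hh : IsDeltaRank h) (hd : Disjoint Sp Sn) (hxp : x ∉ Sp)
    (hxn : x ∉ Sn) : 2 * h Sp Sn + 1 ≤ h (insert x Sp) Sn + h Sp (insert x Sn) := by
  have H := hh.bisubmodular (insert x Sp) Sn Sp (insert x Sn) (by grind [disjoint_left])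
    (by grind [disjoint_left])
  rw [show insert x Sp ∩ Sp = Sp by grind, show Sn ∩ insert x Sn = Sn by grind,
    show (insert x Sp ∪ Sp) \ (Sn ∪ insert x Sn) = Sp by grind [disjoint_left],
    show (Sn ∪ insert x Sn) \ (insert x Sp ∪ Sp) = Sn by grind [disjoint_left],
    show insert x Sp ∩ insert x Sn = {x} by grind [disjoint_left],
    show Sn ∩ Sp = ∅ by grind [disjoint_left], card_singleton, card_empty] at H
  omega

theorem le_insert_left (hh : IsDeltaRank h) (hd : Disjoint Sp Sn) (hxp : x ∉ Sp)
    (hxn : x ∉ Sn) : h Sp Sn ≤ h (insert x Sp) Sn := by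
  have := hh.two_mul_add_one_le hd hxp hxn
  have := hh.swap.insert_left_le_add_one hd.symm hxn hxp
  omega

theorem insert_left_or_insert_right_eq_add_one (hh : IsDeltaRank h) (hd : Disjoint Sp Sn)
    (hxp : x ∉ Sp) (hxn : x ∉ Sn) :
    h (insert x Sp) Sn = h Sp Sn + 1 ∨ h Sp (insert x Sn) = h Sp Sn + 1 := by
  have := hh.two_mul_add_one_le hd hxp hxn
  have := hh.insert_left_le_add_one hd hxp hxn
  have := hh.swap.insert_left_le_add_one hd.symm hxn hxp
  omega

theorem le_union_left (hh : IsDeltaRank h) (hd : Disjoint (Sp ∪ X) Sn) :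
    h Sp Sn ≤ h (Sp ∪ X) Sn ∧ h (Sp ∪ X) Sn ≤ h Sp Sn + X.card := by
  induction X using Finset.induction_on with
  | empty => simp
  | insert a X ha ih =>
    obtain ⟨ih₁, ih₂⟩ := ih (hd.mono_left (union_subset_union_right (subset_insert a X)))
    rw [union_insert, card_insert_of_notMem ha, Nat.cast_succ]
    by_cases haS : a ∈ Sp ∪ X
    · rw [insert_eq_of_mem haS]
      omega
    · have hdX : Disjoint (Sp ∪ X) Sn := hd.mono_left (by grind)
      have haSn : a ∉ Sn := disjoint_left.mp hd (by simp)
      have := hh.le_insert_left hdX haS haSn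
      have := hh.insert_left_le_add_one hdX haS haSn
      omega

theorem le_of_subset (hh : IsDeltaRank h) (hp : Sp' ⊆ Sp) (hn : Sn' ⊆ Sn)
    (hd : Disjoint Sp Sn) :
    h Sp' Sn' ≤ h Sp Sn ∧
      h Sp Sn + (Sp'.card + Sn'.card) ≤ h Sp' Sn' + (Sp.card + Sn.card) := by
  have hp' := card_sdiff_add_card_eq_card hp
  have hn' := card_sdiff_add_card_eq_card hn
  have hSp := hh.le_union_left (X := Sp \ Sp') (Sn := Sn')
    (by rw [union_sdiff_of_subset hp]; exact hd.mono_right hn)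
  have hSn := hh.swap.le_union_left (X := Sn \ Sn') (Sn := Sp)
    (by rw [union_sdiff_of_subset hn]; exact hd.symm)
  rw [union_sdiff_of_subset hp] at hSp
  rw [union_sdiff_of_subset hn] at hSn
  omega

theorem le_card (hh : IsDeltaRank h) (hd : Disjoint Sp Sn) :
    h Sp Sn ≤ Sp.card + Sn.card := by
  simpa [hh.empty] using (hh.le_of_subset (empty_subset Sp) (empty_subset Sn) hd).2

theorem eq_card_of_subset (hh : IsDeltaRank h) (hp : Sp' ⊆ Sp) (hn : Sn' ⊆ Sn)
    (hd : Disjoint Sp Sn) (hS : h Sp Sn = Sp.card + Sn.card) :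
    h Sp' Sn' = Sp'.card + Sn'.card :=
  le_antisymm (hh.le_card (hd.mono hp hn)) (by linarith [(hh.le_of_subset hp hn hd).2])

theorem eq_add_card_of_forall_erase_lt (hh : IsDeltaRank h) (hd : Disjoint Sp Sn)
    (hdrop : ∀ x ∈ Sp, h (Sp.erase x) Sn < h Sp Sn) : h Sp Sn = h ∅ Sn + Sp.card := by
  induction Sp using Finset.induction_on with
  | empty => simp
  | insert a A ha ih =>
    have hdA : Disjoint A Sn := hd.mono_left (subset_insert a A)
    -- deleting `x` from `insert a A` loses, so by diminishing returns deleting it from `A` does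
    have hdropA : ∀ x ∈ A, h (A.erase x) Sn < h A Sn := by
      intro x hx
      have hx' : x ∈ insert a A := mem_insert_of_mem hx
      have hgain := hh.insert_left_sub_le (erase_subset_erase x (subset_insert a A)) subset_rfl
        (hd.mono_left (erase_subset x _)) (notMem_erase x _) (disjoint_left.mp hd hx')
      have := hdrop x hx'
      rw [insert_erase hx', insert_erase hx] at hgain
      omega
    have hlt := hdrop a (mem_insert_self a A)
    have hle := hh.insert_left_le_add_one hdA ha (disjoint_left.mp hd (mem_insert_self a A))
    rw [erase_insert ha] at hlt
    have := ih hdA hdropA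
    rw [card_insert_of_notMem ha, Nat.cast_succ]
    omega

theorem eq_card_of_forall_erase_lt (hh : IsDeltaRank h) (hd : Disjoint Sp Sn)
    (hp : ∀ x ∈ Sp, h (Sp.erase x) Sn < h Sp Sn) (hn : ∀ x ∈ Sn, h Sp (Sn.erase x) < h Sp Sn) :
    h Sp Sn = Sp.card + Sn.card := by
  have hn' : ∀ x ∈ Sn, h ∅ (Sn.erase x) < h ∅ Sn := by
    intro x hx
    have hgain := hh.swap.insert_left_sub_le (Sp' := Sn.erase x) (Sn' := ∅) subset_rfl
      (empty_subset Sp) (hd.symm.mono_left (erase_subset x Sn)) (notMem_erase x Sn)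
      (disjoint_right.mp hd hx)
    have := hn x hx
    simp only [insert_erase hx] at hgain
    omega
  rw [hh.eq_add_card_of_forall_erase_lt hd hp,
    hh.swap.eq_add_card_of_forall_erase_lt (disjoint_empty_right Sn) hn', hh.empty]
  ring

theorem union_left_le (hh : IsDeltaRank h) (hp : Sp' ⊆ Sp) (hn : Sn' ⊆ Sn)
    (hd : Disjoint (Sp ∪ X) Sn) (hX : ∀ e ∈ X, h (insert e Sp') Sn' ≤ h Sp' Sn') :
    h (Sp ∪ X) Sn ≤ h Sp Sn := by
  induction X using Finset.induction_on with
  | empty => simp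
  | insert a X _ ih =>
    have ih' := ih (hd.mono_left (by grind)) fun e he => hX e (mem_insert_of_mem he)
    rw [union_insert]
    by_cases haS : a ∈ Sp ∪ X
    · rwa [insert_eq_of_mem haS]
    · have := hh.insert_left_sub_le (hp.trans subset_union_left) hn (hd.mono_left (by grind))
        haS (disjoint_left.mp hd (by simp))
      have := hX a (mem_insert_self a X)
      omega

theorem union_right_le (hh : IsDeltaRank h) (hp : Sp' ⊆ Sp) (hn : Sn' ⊆ Sn)
    (hd : Disjoint Sp (Sn ∪ X)) (hX : ∀ e ∈ X, h Sp' (insert e Sn') ≤ h Sp' Sn') :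
    h Sp (Sn ∪ X) ≤ h Sp Sn :=
  hh.swap.union_left_le hn hp hd.symm hX

theorem le_of_forall_insert_le (hh : IsDeltaRank h) {Bp Bn : Finset α} (hp : Sp ⊆ Bp)
    (hn : Sn ⊆ Bn) (hd : Disjoint Bp Bn) (hgp : ∀ e ∈ Bp \ Sp, h (insert e Sp) Sn ≤ h Sp Sn)
    (hgn : ∀ e ∈ Bn \ Sn, h Sp (insert e Sn) ≤ h Sp Sn) : h Bp Bn ≤ h Sp Sn := by
  have hBp := union_sdiff_of_subset hp
  have hBn := union_sdiff_of_subset hn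
  calc h Bp Bn = h (Sp ∪ Bp \ Sp) (Sn ∪ Bn \ Sn) := by rw [hBp, hBn]
    _ ≤ h (Sp ∪ Bp \ Sp) Sn :=
        hh.union_right_le subset_union_left subset_rfl (by rwa [hBp, hBn]) hgn
    _ ≤ h Sp Sn :=
        hh.union_left_le subset_rfl subset_rfl (by rw [hBp]; exact hd.mono_right hn) hgp

variable [Fintype α]

theorem le_card_compl (hh : IsDeltaRank h) (T : Finset α) : h T Tᶜ ≤ Fintype.card α := by
  have := hh.le_card (disjoint_compl_right (a := T))
  rwa [← Nat.cast_add, card_add_card_compl] at this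

theorem exists_eq_add_card_compl_union (hh : IsDeltaRank h) (hd : Disjoint Sp Sn) :
    ∃ T, Sp ⊆ T ∧ Disjoint Sn T ∧ h T Tᶜ = h Sp Sn + (Sp ∪ Sn)ᶜ.card := by
  induction hk : (Sp ∪ Sn)ᶜ.card generalizing Sp Sn with
  | zero =>
    have hU : Sp ∪ Sn = univ := _root_.compl_eq_bot.mp (card_eq_zero.mp hk)
    have hSn : Sn = Spᶜ := by
      ext e
      have := congrArg (e ∈ ·) hU
      grind [disjoint_left, mem_compl]
    subst hSn
    exact ⟨Sp, subset_rfl, disjoint_compl_left, by simp⟩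
  | succ k ih =>
    obtain ⟨x, hx⟩ := card_pos.mp (by omega : 0 < (Sp ∪ Sn)ᶜ.card)
    have hxp : x ∉ Sp := by grind [mem_compl]
    have hxn : x ∉ Sn := by grind [mem_compl]
    obtain ⟨Sp', Sn', hp, hn, hd', hS', hc'⟩ : ∃ Sp' Sn', Sp ⊆ Sp' ∧ Sn ⊆ Sn' ∧
        Disjoint Sp' Sn' ∧ h Sp' Sn' = h Sp Sn + 1 ∧ (Sp' ∪ Sn')ᶜ = (Sp ∪ Sn)ᶜ.erase x := by
      rcases hh.insert_left_or_insert_right_eq_add_one hd hxp hxn with hr | hr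
      · exact ⟨insert x Sp, Sn, subset_insert x Sp, subset_rfl, by grind [disjoint_left], hr,
          by grind [mem_compl]⟩
      · exact ⟨Sp, insert x Sn, subset_rfl, subset_insert x Sn, by grind [disjoint_left], hr,
          by grind [mem_compl]⟩
    obtain ⟨T, hpT, hnT, hT⟩ := ih hd' (by rw [hc', card_erase_of_mem hx, hk]; rfl)
    exact ⟨T, hp.trans hpT, hnT.mono_left hn, by push_cast; omega⟩

theorem exists_lt_symmDiff_singleton (hh : IsDeltaRank h) {T : Finset α}
    (hT : h T Tᶜ < Fintype.card α) : ∃ x, h T Tᶜ < h (T ∆ {x}) (T ∆ {x})ᶜ := by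
  by_contra! hflip
  refine hT.ne ?_
  rw [← card_add_card_compl T, Nat.cast_add]
  -- if no flip gains, then every deletion loses
  refine hh.eq_card_of_forall_erase_lt disjoint_compl_right (fun x hx => ?_) (fun x hx => ?_)
  · have hx' : x ∉ Tᶜ := by simpa using hx
    have := hflip x
    rw [show T ∆ {x} = T.erase x by grind [mem_symmDiff],
      show (T.erase x)ᶜ = insert x Tᶜ by grind [mem_compl]] at this
    have := hh.insert_left_or_insert_right_eq_add_one
      (disjoint_compl_right.mono_left (erase_subset x T)) (notMem_erase x T) hx'
    rw [insert_erase hx] at this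
    omega
  · have hx' : x ∉ T := by simpa using hx
    have := hflip x
    rw [show T ∆ {x} = insert x T by grind [mem_symmDiff],
      show (insert x T)ᶜ = Tᶜ.erase x by grind [mem_compl]] at this
    have := hh.insert_left_or_insert_right_eq_add_one
      (disjoint_compl_right.mono_right (erase_subset x Tᶜ)) hx' (notMem_erase x Tᶜ)
    rw [insert_erase hx] at this
    omega

theorem exists_card_symmDiff_le (hh : IsDeltaRank h) (k : ℕ) (T : Finset α)
    (hk : Fintype.card α ≤ h T Tᶜ + k) :
    ∃ F, h F Fᶜ = Fintype.card α ∧ (T ∆ F).card ≤ k := by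
  induction k generalizing T with
  | zero => exact ⟨T, le_antisymm (hh.le_card_compl T) (by simpa using hk), by simp⟩
  | succ k ih =>
    rcases (hh.le_card_compl T).lt_or_eq with hlt | heq
    · obtain ⟨x, hx⟩ := hh.exists_lt_symmDiff_singleton hlt
      obtain ⟨F, hF, hdist⟩ := ih (T ∆ {x}) (by push_cast at hk; omega)
      refine ⟨F, hF, ?_⟩
      calc (T ∆ F).card ≤ (T ∆ (T ∆ {x}) ∪ (T ∆ {x}) ∆ F).card :=
            card_le_card (symmDiff_triangle _ _ _)
        _ ≤ 1 + k := by
          rw [symmDiff_symmDiff_cancel_left]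
          exact (card_union_le _ _).trans (by simpa using hdist)
        _ = k + 1 := add_comm 1 k
    · exact ⟨T, heq, by simp⟩

theorem agreement_le (hh : IsDeltaRank h) {F : Finset α} (hF : h F Fᶜ = Fintype.card α)
    (hd : Disjoint Sp Sn) : (agreement F Sp Sn : ℤ) ≤ h Sp Sn := by
  have hsub : Sn \ F ⊆ Fᶜ := fun e he => mem_compl.mpr (mem_sdiff.mp he).2
  have hfull := hh.eq_card_of_subset (inter_subset_right (s₁ := Sp)) hsub disjoint_compl_right
    (by rw [hF, ← Nat.cast_add, card_add_card_compl])
  rw [agreement, Nat.cast_add, ← hfull]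
  exact (hh.le_of_subset inter_subset_left sdiff_subset hd).1

theorem exists_le_agreement (hh : IsDeltaRank h) (hd : Disjoint Sp Sn) :
    ∃ F, h F Fᶜ = Fintype.card α ∧ h Sp Sn ≤ agreement F Sp Sn := by
  obtain ⟨T, hpT, hnT, hT⟩ := hh.exists_eq_add_card_compl_union hd
  obtain ⟨F, hF, hTF⟩ := hh.exists_card_symmDiff_le (Fintype.card α - h T Tᶜ).toNat T (by omega)
  refine ⟨F, hF, ?_⟩
  -- every element of `S` on which `F` disagrees with `S` lies in `T ∆ F`
  have hdis : ((Sp \ F).card + (Sn ∩ F).card : ℤ) ≤ (T ∆ F).card := by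
    rw [← Nat.cast_add, ← card_union_of_disjoint (by grind [disjoint_left])]
    exact_mod_cast card_le_card (by grind [mem_symmDiff, disjoint_left])
  have := card_inter_add_card_sdiff Sp F
  have := card_inter_add_card_sdiff Sn F
  have := card_add_card_compl (Sp ∪ Sn)
  have := card_union_of_disjoint hd
  have := hh.le_card_compl T
  unfold agreement
  push_cast
  omega

theorem exists_subset_disjoint_of_card_le (hh : IsDeltaRank h) (hd : Disjoint Sp Sn)
    (hS : (Sp.card + Sn.card : ℤ) ≤ h Sp Sn) :
    ∃ F, h F Fᶜ = Fintype.card α ∧ Sp ⊆ F ∧ Disjoint Sn F := by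
  obtain ⟨F, hF, hle⟩ := hh.exists_le_agreement hd
  unfold agreement at hle
  have := card_le_card (inter_subset_left (s₁ := Sp) (s₂ := F))
  have := card_le_card (sdiff_subset (s := Sn) (t := F))
  exact ⟨F, hF, inter_eq_left.mp (eq_of_subset_of_card_le inter_subset_left (by omega)),
    sdiff_eq_self_iff_disjoint.mp (eq_of_subset_of_card_le sdiff_subset (by omega))⟩

theorem le_of_forall_feasible (hh : IsDeltaRank h) {Bp Bn : Finset α} (hp : Sp ⊆ Bp)
    (hn : Sn ⊆ Bn) (hd : Disjoint Bp Bn) (hS : h Sp Sn = Sp.card + Sn.card)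
    (hB : ∀ F, h F Fᶜ = Fintype.card α → Sp ⊆ F → Disjoint Sn F →
      Disjoint (Bp \ Sp) F ∧ Bn \ Sn ⊆ F) :
    h Bp Bn ≤ h Sp Sn := by
  refine hh.le_of_forall_insert_le hp hn hd (fun e he => ?_) (fun e he => ?_) <;> by_contra! hlt
  · obtain ⟨F, hF, hsub, hdis⟩ := hh.exists_subset_disjoint_of_card_le (Sp := insert e Sp)
      (Sn := Sn) (by grind [disjoint_left])
      (by rw [card_insert_of_notMem (mem_sdiff.mp he).2]; push_cast; omega)
    exact disjoint_left.mp (hB F hF ((subset_insert e Sp).trans hsub) hdis).1 he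
      (hsub (mem_insert_self e Sp))
  · obtain ⟨F, hF, hsub, hdis⟩ := hh.exists_subset_disjoint_of_card_le (Sp := Sp)
      (Sn := insert e Sn) (by grind [disjoint_left])
      (by rw [card_insert_of_notMem (mem_sdiff.mp he).2]; push_cast; omega)
    exact disjoint_left.mp hdis (mem_insert_self e Sn)
      ((hB F hF hsub (hdis.mono_left (subset_insert e Sn))).2 he)

theorem le_insert_add_one (hh : IsDeltaRank h) {T : Finset α} (hx : x ∉ T) :
    h T Tᶜ ≤ h (insert x T) (insert x T)ᶜ + 1 := by
  have hd : Disjoint T (insert x T)ᶜ := disjoint_compl_right.mono_left (subset_insert x T)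
  have hx' : x ∉ (insert x T)ᶜ := by simp
  have hTc : insert x (insert x T)ᶜ = Tᶜ := by grind [mem_compl]
  have hup := hh.swap.insert_left_le_add_one hd.symm hx' hx
  rw [hTc] at hup
  have := hh.le_insert_left hd hx hx'
  omega

theorem card_symmDiff_le_two (hh : IsDeltaRank h) {F₁ F : Finset α}
    (hF₁ : h F₁ F₁ᶜ = Fintype.card α) (hF : h F Fᶜ = Fintype.card α) (hxF : x ∈ F)
    (hxF₁ : x ∉ F₁)
    (hmin : ∀ F', h F' F'ᶜ = Fintype.card α → x ∈ F' → F₁ ∆ F' ⊆ F₁ ∆ F →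
      (F₁ ∆ F).card ≤ (F₁ ∆ F').card) :
    (F₁ ∆ F).card ≤ 2 := by
  set E := F₁ ∆ F
  set Ap := insert x (F₁ ∩ F)
  set An := (F₁ ∪ F)ᶜ
  set B := insert x F₁
  have hAp : Ap ⊆ B := by grind
  have hAn : An ⊆ Bᶜ := by grind [mem_compl]
  have hA : h Ap An = Ap.card + An.card :=
    hh.eq_card_of_subset (Sp := F) (Sn := Fᶜ) (by grind) (by grind [mem_compl])
      disjoint_compl_right (by rw [hF, ← Nat.cast_add, card_add_card_compl])
  -- by minimality, a feasible set through `A` differs from `F₁` on all of `E`, so from `B` off `A`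
  have hB : h B Bᶜ ≤ h Ap An := by
    refine hh.le_of_forall_feasible hAp hAn disjoint_compl_right hA fun F' hF' hApF' hAnF' => ?_
    have hsub : F₁ ∆ F' ⊆ E := by grind [mem_symmDiff, disjoint_left, mem_compl]
    have hEq := eq_of_subset_of_card_le hsub (hmin F' hF' (hApF' (mem_insert_self x _)) hsub)
    refine ⟨disjoint_left.mpr fun e he heF' => ?_, fun e he => ?_⟩
    · have heE : e ∈ F₁ ∆ F' := hEq ▸ (show e ∈ E by grind [mem_symmDiff])
      grind [mem_symmDiff]
    · have heE : e ∈ F₁ ∆ F' := hEq ▸ (show e ∈ E by grind [mem_symmDiff, mem_compl])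
      grind [mem_symmDiff, mem_compl]
  have hEx : E.erase x ⊆ (B \ Ap) ∪ (Bᶜ \ An) := by
    intro e
    simp only [E, B, Ap, An, mem_erase, mem_symmDiff, mem_union, mem_sdiff, mem_compl, mem_insert,
      mem_inter]
    tauto
  have := card_le_card hEx
  have := card_union_le (B \ Ap) (Bᶜ \ An)
  have hxE : x ∈ E := mem_symmDiff.mpr (.inr ⟨hxF, hxF₁⟩)
  have := card_erase_add_one hxE
  have := card_sdiff_add_card_eq_card hAp
  have := card_sdiff_add_card_eq_card hAn
  have := card_add_card_compl B
  have : (Fintype.card α : ℤ) ≤ h B Bᶜ + 1 := hF₁ ▸ hh.le_insert_add_one hxF₁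
  change E.card ≤ 2
  omega

theorem exists_symmDiff_pair_of_mem_of_notMem (hh : IsDeltaRank h)
    (hF₁ : h F₁ F₁ᶜ = Fintype.card α) (hF₂ : h F₂ F₂ᶜ = Fintype.card α) (hx₂ : x ∈ F₂)
    (hx₁ : x ∉ F₁) : ∃ y ∈ F₁ ∆ F₂, h (F₁ ∆ {x, y}) (F₁ ∆ {x, y})ᶜ = Fintype.card α := by
  obtain ⟨F, hF, hmin⟩ := exists_min_image
    (univ.filter fun F => h F Fᶜ = Fintype.card α ∧ x ∈ F ∧ F₁ ∆ F ⊆ F₁ ∆ F₂)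
    (fun F => (F₁ ∆ F).card) ⟨F₂, by simp [hF₂, hx₂]⟩
  simp only [mem_filter, mem_univ, true_and] at hF hmin
  obtain ⟨hF, hxF, hFsub⟩ := hF
  have hE := hh.card_symmDiff_le_two hF₁ hF hxF hx₁ fun F' hF' hxF' hsub =>
    hmin F' ⟨hF', hxF', hsub.trans hFsub⟩
  obtain ⟨y, hy, hEq⟩ := exists_eq_pair_of_card_le_two (mem_symmDiff.mpr (.inr ⟨hxF, hx₁⟩)) hE
  exact ⟨y, hFsub hy, by rwa [← hEq, symmDiff_symmDiff_cancel_left]⟩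

theorem exists_symmDiff_pair (hh : IsDeltaRank h) (hF₁ : h F₁ F₁ᶜ = Fintype.card α)
    (hF₂ : h F₂ F₂ᶜ = Fintype.card α) (hx : x ∈ F₁ ∆ F₂) :
    ∃ y ∈ F₁ ∆ F₂, h (F₁ ∆ {x, y}) (F₁ ∆ {x, y})ᶜ = Fintype.card α := by
  rcases mem_symmDiff.mp hx with ⟨hx₁, hx₂⟩ | ⟨hx₂, hx₁⟩
  · -- complementing swaps the roles of `F₁ \ F₂` and `F₂ \ F₁`
    obtain ⟨y, hy, hF⟩ := hh.swap.exists_symmDiff_pair_of_mem_of_notMem (F₁ := F₁ᶜ) (F₂ := F₂ᶜ)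
      (by simpa using hF₁) (by simpa using hF₂) (by simpa using hx₂) (by simpa using hx₁)
    refine ⟨y, by rwa [compl_symmDiff_compl] at hy, ?_⟩
    have hc : (F₁ᶜ ∆ {x, y})ᶜ = F₁ ∆ {x, y} := by grind [mem_symmDiff, mem_compl]
    rwa [hc, ← compl_compl (F₁ᶜ ∆ {x, y}), hc] at hF
  · exact hh.exists_symmDiff_pair_of_mem_of_notMem hF₁ hF₂ hx₂ hx₁

end IsDeltaRank

namespace IsDeltaRank

variable {n : ℕ} {h : Finset (Fin n) → Finset (Fin n) → ℤ} {Sp Sn : Finset (Fin n)}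

noncomputable def toDeltaMatroid (hh : IsDeltaRank h) : DeltaMatroid n where
  feas := univ.filter fun F => h F Fᶜ = Fintype.card (Fin n)
  nonempty := by
    obtain ⟨T, -, -, hT⟩ :=
      hh.exists_eq_add_card_compl_union (disjoint_empty_left (∅ : Finset (Fin n)))
    exact ⟨T, by simpa [hh.empty] using hT⟩
  exchange F₁ hF₁ F₂ hF₂ x hx := by
    simp only [mem_filter, mem_univ, true_and] at hF₁ hF₂ ⊢
    exact hh.exists_symmDiff_pair hF₁ hF₂ hx

theorem two_mul_eq_g (hh : IsDeltaRank h) (hd : Disjoint Sp Sn) :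
    2 * h Sp Sn = hh.toDeltaMatroid.g Sp Sn + Sp.card + Sn.card := by
  obtain ⟨F, hF⟩ := hh.toDeltaMatroid.exists_isMaximizer Sp Sn
  obtain ⟨F', hF', hle⟩ := hh.exists_le_agreement hd
  have := hh.agreement_le (mem_filter.mp hF.1).2 hd
  have := hh.toDeltaMatroid.signedPairing_le_g (Sp := Sp) (Sn := Sn)
    (mem_filter.mpr ⟨mem_univ F', hF'⟩)
  have := hF.g_eq
  have := signedPairing_add_card F Sp Sn
  have := signedPairing_add_card F' Sp Sn
  omega

end IsDeltaRank

/-- **Corollary (characterization of `h_D`).** A function `h` on admissible sets on `[n]` equals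
`h_D = (g_D + |·|)/2` for some delta-matroid `D` if and only if `h(∅) = 0`, `h(S) ∈ {0, 1}`
for `|S| = 1`, and `h(S) + h(T) ≥ h(S ⊓ T) + h(S ⊔ T) + |S ∩ T̄|/2` (stated in doubled form). -/
theorem deltaMatroid_h_characterization (n : ℕ)
    (h : Finset (Fin n) → Finset (Fin n) → ℤ) :
    (∃ D : DeltaMatroid n, ∀ Sp Sn : Finset (Fin n), Disjoint Sp Sn →
        2 * h Sp Sn = D.g Sp Sn + (Sp.card : ℤ) + (Sn.card : ℤ)) ↔
      (h ∅ ∅ = 0 ∧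
        (∀ Sp Sn : Finset (Fin n), Disjoint Sp Sn → Sp.card + Sn.card = 1 →
          h Sp Sn = 0 ∨ h Sp Sn = 1) ∧
        (∀ Sp Sn Tp Tn : Finset (Fin n), Disjoint Sp Sn → Disjoint Tp Tn →
          2 * h (Sp ∩ Tp) (Sn ∩ Tn)
              + 2 * h ((Sp ∪ Tp) \ (Sn ∪ Tn)) ((Sn ∪ Tn) \ (Sp ∪ Tp))
              + ((Sp ∩ Tn).card : ℤ) + ((Sn ∩ Tp).card : ℤ)
            ≤ 2 * h Sp Sn + 2 * h Tp Tn)) := by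
  constructor
  · rintro ⟨D, hD⟩
    have hh := D.isDeltaRank_of_two_mul_eq hD
    exact ⟨hh.empty, hh.card_eq_one, hh.bisubmodular⟩
  · rintro ⟨hempty, hone, hbisub⟩
    have hh : IsDeltaRank h := ⟨hempty, hone, hbisub⟩
    exact ⟨hh.toDeltaMatroid, fun _ _ => hh.two_mul_eq_g⟩
end
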